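/- arXiv:1606.01553 — 2 statements merged into one kernel-verified Lean document; each statement's English description precedes it below -/
import Mathlib

section
/- For every natural number k, the Farey distance between the vertex F(k+1)/F(k) and the vertex ∞ equals ⌊k/2⌋ + 1; that is, d_𝔉(F(k+1)/F(k), ∞) = k/2 + 1 (natural-number division). -/
open OnePoint

/-- Numerator of a Farey vertex: `∞` is represented as `1/0`, and a rational
`p` is represented in lowest terms as `p.num / p.den`. -/
def vNum (x : OnePoint ℚ) : ℤ := OnePoint.rec 1 Rat.num x

/-- Denominator of a Farey vertex. -/
def vDen (x : OnePoint ℚ) : ℤ := OnePoint.rec 0 (fun p => (p.den : ℤ)) x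

/-- The Farey graph: vertices are `ℚ ∪ {∞}`, and two distinct vertices with
lowest-terms representations `a/b` and `c/d` are adjacent iff `|a·d − b·c| = 1`. -/
def fareyGraph : SimpleGraph (OnePoint ℚ) where
  Adj x y := x ≠ y ∧ |vNum x * vDen y - vDen x * vNum y| = 1
  symm := by
    constructor
    rintro x y ⟨hxy, h⟩
    refine ⟨hxy.symm, ?_⟩
    rw [show vNum y * vDen x - vDen y * vNum x
        = -(vNum x * vDen y - vDen x * vNum y) by ring, abs_neg]
    exact h
  loopless := by
    constructor
    rintro x ⟨hxx, -⟩
    exact hxx rfl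

/-- The shifted Fibonacci sequence `F k = Nat.fib (k+1)`. -/
def F : ℕ → ℕ
  | 0 => 1
  | 1 => 1
  | k + 2 => F (k + 1) + F k

/-- The Farey vertex `F (k+1) / F k`. -/
def fibVertex (k : ℕ) : OnePoint ℚ := (((F (k + 1) : ℚ) / (F k : ℚ) : ℚ) : OnePoint ℚ)

/-! ### Auxiliary material -/

open goldenRatio Real

lemma F_eq_fib : ∀ k, F k = Nat.fib (k + 1)
  | 0 => rfl
  | 1 => rfl
  | (k + 2) => by
      show F (k+1) + F k = Nat.fib (k + 2 + 1)
      rw [F_eq_fib (k+1), F_eq_fib k, Nat.add_comm]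
      exact (Nat.fib_add_two).symm

lemma F_pos : ∀ k, 0 < F k
  | 0 => one_pos
  | 1 => one_pos
  | (k + 2) => by
      rw [show F (k+2) = F (k+1) + F k from rfl]
      exact Nat.add_pos_left (F_pos (k+1)) _

lemma F_coprime (k : ℕ) : Nat.Coprime (F (k+1)) (F k) := by
  rw [F_eq_fib, F_eq_fib]
  exact (Nat.fib_coprime_fib_succ (k+1)).symm

lemma vNum_coe (q : ℚ) : vNum (q : OnePoint ℚ) = q.num := rfl
lemma vDen_coe (q : ℚ) : vDen (q : OnePoint ℚ) = (q.den : ℤ) := rfl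
lemma vNum_infty : vNum ∞ = 1 := rfl
lemma vDen_infty : vDen ∞ = 0 := rfl

lemma fibVertex_cast (k : ℕ) :
    ((F (k + 1) : ℚ) / (F k : ℚ) : ℚ) = (((F (k+1) : ℤ) : ℚ) / ((F k : ℤ) : ℚ)) := by
  push_cast; rfl

lemma vNum_fibVertex (k : ℕ) : vNum (fibVertex k) = (F (k+1) : ℤ) := by
  show ((F (k + 1) : ℚ) / (F k : ℚ) : ℚ).num = (F (k+1) : ℤ)
  rw [fibVertex_cast]
  exact Rat.num_div_eq_of_coprime (by exact_mod_cast F_pos k)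
    (by simpa using F_coprime k)

lemma vDen_fibVertex (k : ℕ) : vDen (fibVertex k) = (F k : ℤ) := by
  show (((F (k + 1) : ℚ) / (F k : ℚ) : ℚ).den : ℤ) = (F k : ℤ)
  rw [fibVertex_cast]
  exact Rat.den_div_eq_of_coprime (by exact_mod_cast F_pos k)
    (by simpa using F_coprime k)

/-- Cassini-type identity for the cross-product of `fibVertex (k+2)` and `fibVertex k`. -/
lemma F_cross : ∀ k, (F (k+3) : ℤ) * F k - (F (k+2) : ℤ) * F (k+1) = (-1)^k
  | 0 => by norm_num [show F 3 = 3 from rfl, show F 2 = 2 from rfl,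
      show F 1 = 1 from rfl, show F 0 = 1 from rfl]
  | (k + 1) => by
      have ih := F_cross k
      have e4 : (F (k+4) : ℤ) = (F (k+3) : ℤ) + (F (k+2) : ℤ) := by
        rw [show F (k+4) = F (k+3) + F (k+2) from rfl]; push_cast; ring
      have e2 : (F (k+2) : ℤ) = (F (k+1) : ℤ) + (F k : ℤ) := by
        rw [show F (k+2) = F (k+1) + F k from rfl]; push_cast; ring
      rw [show k+1+3 = k+4 from rfl, show k+1+2 = k+3 from rfl, show k+1+1 = k+2 from rfl]
      rw [e4]
      linear_combination (-1 : ℤ) * ih - (F (k+3) : ℤ) * e2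

/-! ### The potential functions -/

noncomputable def sv (x : OnePoint ℚ) : ℝ := (vNum x : ℝ) - goldenRatio * (vDen x : ℝ)
noncomputable def tv (x : OnePoint ℚ) : ℝ := (vNum x : ℝ) - goldenConj * (vDen x : ℝ)

lemma sv_infty : sv ∞ = 1 := by simp [sv, vNum_infty, vDen_infty]
lemma tv_infty : tv ∞ = 1 := by simp [tv, vNum_infty, vDen_infty]

lemma sv_ne_zero (x : OnePoint ℚ) : sv x ≠ 0 := by
  induction x using OnePoint.rec with
  | infty => rw [sv_infty]; norm_num
  | coe q =>
    intro h
    rw [sv, vNum_coe, vDen_coe] at h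
    push_cast at h
    refine goldenRatio_irrational ⟨q, ?_⟩
    have hd : ((q.den : ℕ) : ℝ) ≠ 0 := by exact_mod_cast q.den_nz
    rw [Rat.cast_def, div_eq_iff hd]
    linarith

lemma tv_ne_zero (x : OnePoint ℚ) : tv x ≠ 0 := by
  induction x using OnePoint.rec with
  | infty => rw [tv_infty]; norm_num
  | coe q =>
    intro h
    rw [tv, vNum_coe, vDen_coe] at h
    push_cast at h
    refine goldenConj_irrational ⟨q, ?_⟩
    have hd : ((q.den : ℕ) : ℝ) ≠ 0 := by exact_mod_cast q.den_nz
    rw [Rat.cast_def, div_eq_iff hd]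
    linarith

lemma sv_mul_tv (x : OnePoint ℚ) :
    sv x * tv x = ((vNum x ^ 2 - vNum x * vDen x - vDen x ^ 2 : ℤ) : ℝ) := by
  rw [sv, tv]
  push_cast
  linear_combination (-( (vNum x : ℝ) * (vDen x : ℝ))) * goldenRatio_add_goldenConj
    + ((vDen x : ℝ)^2) * goldenRatio_mul_goldenConj

lemma one_le_abs_sv_mul_tv (x : OnePoint ℚ) : 1 ≤ |sv x * tv x| := by
  rw [sv_mul_tv]
  have h0 : (vNum x ^ 2 - vNum x * vDen x - vDen x ^ 2 : ℤ) ≠ 0 := by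
    intro h
    have := sv_mul_tv x
    rw [h] at this
    exact mul_ne_zero (sv_ne_zero x) (tv_ne_zero x) (by simpa using this)
  rw [← Int.cast_abs]
  exact_mod_cast Int.one_le_abs h0

lemma cross_eq {x y : OnePoint ℚ} (h : fareyGraph.Adj x y) :
    |sv x * tv y - tv x * sv y| = Real.sqrt 5 := by
  have hid : sv x * tv y - tv x * sv y
      = ((vNum x * vDen y - vDen x * vNum y : ℤ) : ℝ) * Real.sqrt 5 := by
    rw [sv, tv, sv, tv]
    push_cast
    linear_combination ((vNum x : ℝ) * (vDen y : ℝ) - (vDen x : ℝ) * (vNum y : ℝ))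
      * goldenRatio_sub_goldenConj
  rw [hid, abs_mul, abs_of_nonneg (Real.sqrt_nonneg 5), ← Int.cast_abs, h.2]
  norm_num

/-- Key step: along an edge the potential ratio changes by at most `φ ^ 4`. -/
lemma step_bound {x y : OnePoint ℚ} (h : fareyGraph.Adj x y) :
    |tv x| * |sv y| ≤ goldenRatio ^ 4 * (|sv x| * |tv y|) := by
  set c := Real.sqrt 5 with hc
  have hc2 : c ^ 2 = 5 := Real.sq_sqrt (by norm_num)
  have hc0 : 0 < c := Real.sqrt_pos.mpr (by norm_num)
  have hphi4 : goldenRatio ^ 4 = (7 + 3*c)/2 := by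
    show ((1+c)/2)^4 = _
    linear_combination ((c^2 + 4*c + 11)/16) * hc2
  have hcross := cross_eq h
  set A := |tv x * sv y| with hA
  set B := |sv x * tv y| with hB
  have hAle : A ≤ B + c := by
    have h1 := abs_sub_abs_le_abs_sub (tv x * sv y) (sv x * tv y)
    rw [abs_sub_comm, hcross] at h1
    linarith
  have hBpos : 0 < B := abs_pos.mpr (mul_ne_zero (sv_ne_zero x) (tv_ne_zero y))
  have hprod : 1 ≤ B * A := by
    have e : B * A = |sv x * tv x| * |sv y * tv y| := by
      rw [hA, hB, ← abs_mul,
        show (sv x * tv y) * (tv x * sv y) = (sv x * tv x) * (sv y * tv y) by ring,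
        abs_mul]
    rw [e]
    have := one_le_abs_sv_mul_tv x
    have := one_le_abs_sv_mul_tv y
    nlinarith
  have h1 : 1 ≤ B * (B + c) :=
    le_trans hprod (mul_le_mul_of_nonneg_left hAle hBpos.le)
  have hBge : (3 - c)/2 ≤ B := by nlinarith [sq_nonneg (2*B + c - 3)]
  have h2 : (5 + 3*c)/2 * ((3 - c)/2) ≤ (5 + 3*c)/2 * B := by
    apply mul_le_mul_of_nonneg_left hBge
    linarith
  rw [← abs_mul, ← abs_mul, ← hA, ← hB, hphi4]
  nlinarith [hAle, h2, hc2]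

/-- The potential ratio grows by at most `φ ^ 4` per step on any walk. -/
lemma walk_bound' {x y : OnePoint ℚ} (p : fareyGraph.Walk x y) :
    |tv x| * |sv y| ≤ goldenRatio ^ (4 * p.length) * (|sv x| * |tv y|) := by
  induction p with
  | nil => simp [mul_comm]
  | @cons x y z h q ih =>
    have hpos : 0 < |sv y| * |tv y| :=
      mul_pos (abs_pos.mpr (sv_ne_zero y)) (abs_pos.mpr (tv_ne_zero y))
    apply le_of_mul_le_mul_right _ hpos
    rw [SimpleGraph.Walk.length_cons]
    have m := mul_le_mul (step_bound h) ih (by positivity) (by positivity)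
    calc |tv x| * |sv z| * (|sv y| * |tv y|)
        = (|tv x| * |sv y|) * (|tv y| * |sv z|) := by ring
      _ ≤ (goldenRatio ^ 4 * (|sv x| * |tv y|))
          * (goldenRatio ^ (4 * q.length) * (|sv y| * |tv z|)) := m
      _ = goldenRatio ^ (4 * (q.length + 1)) * (|sv x| * |tv z|) * (|sv y| * |tv y|) := by
          rw [show 4 * (q.length + 1) = 4 + 4 * q.length by ring, pow_add]
          ring

/-- The potential grows by at most `φ ^ 4` per step on any walk to `∞`. -/
lemma walk_bound {x : OnePoint ℚ} (p : fareyGraph.Walk x ∞) :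
    |tv x| ≤ goldenRatio ^ (4 * p.length) * |sv x| := by
  have h := walk_bound' p
  rw [sv_infty, tv_infty] at h
  simpa using h

lemma sv_fibVertex (k : ℕ) : sv (fibVertex k) = goldenConj ^ (k+1) := by
  rw [sv, vNum_fibVertex, vDen_fibVertex, F_eq_fib, F_eq_fib]
  push_cast
  exact_mod_cast fib_succ_sub_goldenRatio_mul_fib (k+1)

lemma fib_gold_exp (n : ℕ) : (Nat.fib (n+1) : ℝ) - goldenConj * Nat.fib n = goldenRatio ^ n := by
  apply mul_left_cancel₀ goldenRatio_ne_zero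
  linear_combination goldenRatio_mul_fib_succ_add_fib n - (Nat.fib n : ℝ) * goldenRatio_mul_goldenConj

lemma tv_fibVertex (k : ℕ) : tv (fibVertex k) = goldenRatio ^ (k+1) := by
  rw [tv, vNum_fibVertex, vDen_fibVertex, F_eq_fib, F_eq_fib]
  push_cast
  exact_mod_cast fib_gold_exp (k+1)

/-! ### The explicit walk -/

lemma fibVertex_ne (k : ℕ) : fibVertex (k+2) ≠ fibVertex k := by
  intro h
  have h1 := congrArg vNum h
  have h2 := congrArg vDen h
  rw [vNum_fibVertex, vNum_fibVertex] at h1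
  rw [vDen_fibVertex, vDen_fibVertex] at h2
  have hc := F_cross k
  rw [show k+3 = (k+2)+1 from rfl, h1, h2] at hc
  have : ((-1 : ℤ))^k ≠ 0 := pow_ne_zero _ (by norm_num)
  apply this
  rw [← hc]; ring

lemma adj_step (k : ℕ) : fareyGraph.Adj (fibVertex (k+2)) (fibVertex k) := by
  refine ⟨fibVertex_ne k, ?_⟩
  rw [vNum_fibVertex, vDen_fibVertex, vNum_fibVertex, vDen_fibVertex]
  rw [show k+2+1 = k+3 from rfl, F_cross k, abs_pow, abs_neg, abs_one, one_pow]

lemma adj_zero : fareyGraph.Adj (fibVertex 0) ∞ := by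
  refine ⟨OnePoint.coe_ne_infty _, ?_⟩
  rw [vNum_fibVertex, vDen_fibVertex, vNum_infty, vDen_infty]
  norm_num [show F 1 = 1 from rfl, show F 0 = 1 from rfl]

lemma adj_one : fareyGraph.Adj (fibVertex 1) ∞ := by
  refine ⟨OnePoint.coe_ne_infty _, ?_⟩
  rw [vNum_fibVertex, vDen_fibVertex, vNum_infty, vDen_infty]
  norm_num [show F 2 = 2 from rfl, show F 1 = 1 from rfl]

def fibWalk : (k : ℕ) → fareyGraph.Walk (fibVertex k) ∞
  | 0 => SimpleGraph.Walk.cons adj_zero SimpleGraph.Walk.nil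
  | 1 => SimpleGraph.Walk.cons adj_one SimpleGraph.Walk.nil
  | (k + 2) => SimpleGraph.Walk.cons (adj_step k) (fibWalk k)

lemma fibWalk_length : ∀ k, (fibWalk k).length = k / 2 + 1
  | 0 => rfl
  | 1 => rfl
  | (k + 2) => by
      rw [fibWalk, SimpleGraph.Walk.length_cons, fibWalk_length k]
      omega

/-! ### Main theorem -/

/-- For every natural number `k`, the Farey distance between the
vertex `F(k+1)/F(k)` and the vertex `∞` equals `⌊k/2⌋ + 1`. -/
theorem farey_dist_fibVertex_infty (k : ℕ) :
    fareyGraph.dist (fibVertex k) ∞ = k / 2 + 1 := by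
  apply le_antisymm
  · calc fareyGraph.dist (fibVertex k) ∞ ≤ (fibWalk k).length :=
        SimpleGraph.dist_le (fibWalk k)
      _ = k / 2 + 1 := fibWalk_length k
  · have hr : fareyGraph.Reachable (fibVertex k) ∞ := ⟨fibWalk k⟩
    obtain ⟨p, hp⟩ := hr.exists_walk_length_eq_dist
    have hb := walk_bound p
    rw [hp, sv_fibVertex, tv_fibVertex] at hb
    have habs1 : |goldenRatio ^ (k+1)| = goldenRatio ^ (k+1) :=
      abs_of_pos (pow_pos goldenRatio_pos _)
    have habs2 : |goldenConj ^ (k+1)| = (-goldenConj) ^ (k+1) := by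
      rw [abs_pow, abs_of_neg goldenConj_neg]
    rw [habs1, habs2] at hb
    have hmul : goldenRatio ^ (k+1) * goldenRatio ^ (k+1)
        ≤ (goldenRatio ^ (4 * fareyGraph.dist (fibVertex k) ∞) * (-goldenConj) ^ (k+1))
          * goldenRatio ^ (k+1) :=
      mul_le_mul_of_nonneg_right hb (pow_pos goldenRatio_pos _).le
    have hone : (-goldenConj) ^ (k+1) * goldenRatio ^ (k+1) = 1 := by
      rw [← mul_pow, show -goldenConj * goldenRatio = 1 by
        linear_combination -goldenConj_mul_goldenRatio, one_pow]
    have hkey : goldenRatio ^ (2*(k+1)) ≤ goldenRatio ^ (4 * fareyGraph.dist (fibVertex k) ∞) := by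
      calc goldenRatio ^ (2*(k+1)) = goldenRatio ^ (k+1) * goldenRatio ^ (k+1) := by
            rw [← pow_add]; ring_nf
        _ ≤ (goldenRatio ^ (4 * fareyGraph.dist (fibVertex k) ∞) * (-goldenConj) ^ (k+1))
            * goldenRatio ^ (k+1) := hmul
        _ = goldenRatio ^ (4 * fareyGraph.dist (fibVertex k) ∞) := by
            rw [mul_assoc, hone, mul_one]
    have := (pow_le_pow_iff_right₀ one_lt_goldenRatio).mp hkey
    omega
end

section
/- The Farey distance between two slopes is at most log₂ of their intersection number plus one. Precisely: let two distinct Farey-graph vertices be represented in lowest terms by a/b and c/d, and let Δ = |a·d − b·c| (so Δ ≥ 1). If Δ ≤ 2^n for a natural number n, then the Farey distance between the two vertices is at most n + 1; equivalently, Δ ≥ 2^(d_𝔉 − 1) where d_𝔉 is their Farey distance. -/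
open OnePoint

lemma vDen_nonneg (x : OnePoint ℚ) : 0 ≤ vDen x := by
  cases x with
  | infty => exact le_refl 0
  | coe p => exact Int.natCast_nonneg p.den

lemma farey_nondeg {x y : OnePoint ℚ} (hxy : x ≠ y) :
    vNum x * vDen y - vDen x * vNum y ≠ 0 := by
  cases x with
  | infty =>
    cases y with
    | infty => exact absurd rfl hxy
    | coe r =>
      show (1 : ℤ) * r.den - 0 * r.num ≠ 0
      simp [r.den_nz]
  | coe p =>
    cases y with
    | infty =>
      show (p.num : ℤ) * 0 - p.den * 1 ≠ 0
      simp [p.den_nz]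
    | coe r =>
      show (p.num : ℤ) * r.den - p.den * r.num ≠ 0
      intro heq
      apply hxy
      have h2 : (p.num : ℚ) / p.den = (r.num : ℚ) / r.den := by
        rw [div_eq_div_iff (by exact_mod_cast p.den_nz) (by exact_mod_cast r.den_nz)]
        have := sub_eq_zero.mp heq
        have h3 : (p.num : ℤ) * r.den = r.num * p.den := by linarith
        exact_mod_cast h3
      rw [Rat.num_div_den, Rat.num_div_den] at h2
      exact congrArg _ h2

lemma farey_coprime (y : OnePoint ℚ) : IsCoprime (vNum y) (vDen y) := by
  cases y with
  | infty => exact isCoprime_one_left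
  | coe p =>
    rw [Int.isCoprime_iff_gcd_eq_one]
    show Int.gcd p.num p.den = 1
    simpa [Int.gcd] using p.reduced

lemma exists_vertex_pos (p : ℤ) (q : ℤ) (hq : 0 < q) (hco : IsCoprime p q) :
    ∃ z : OnePoint ℚ, ∀ a b : ℤ, |a * vDen z - b * vNum z| = |a * q - b * p| := by
  have hgcd : Int.gcd p q = 1 := Int.isCoprime_iff_gcd_eq_one.mp hco
  have hq' : q.toNat ≠ 0 := by omega
  have hred : p.natAbs.Coprime q.toNat := by
    rwa [show q.toNat = q.natAbs by omega]
  refine ⟨((Rat.mk' p q.toNat hq' hred : ℚ) : OnePoint ℚ), fun a b => ?_⟩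
  have h1 : vNum ((Rat.mk' p q.toNat hq' hred : ℚ) : OnePoint ℚ) = p := rfl
  have h2 : vDen ((Rat.mk' p q.toNat hq' hred : ℚ) : OnePoint ℚ) = q := by
    show ((q.toNat : ℕ) : ℤ) = q
    omega
  rw [h1, h2]

lemma exists_vertex (p : ℤ) (q : ℤ) (hco : IsCoprime p q) :
    ∃ z : OnePoint ℚ, ∀ a b : ℤ, |a * vDen z - b * vNum z| = |a * q - b * p| := by
  rcases lt_trichotomy q 0 with hq | hq | hq
  · obtain ⟨z, hz⟩ := exists_vertex_pos (-p) (-q) (by omega) (hco.neg_neg)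
    refine ⟨z, fun a b => ?_⟩
    rw [hz a b, show a * -q - b * -p = -(a * q - b * p) by ring, abs_neg]
  · subst hq
    have hu : IsUnit p := (isCoprime_zero_right.mp hco)
    rcases Int.isUnit_iff.mp hu with h | h <;> subst h
    · exact ⟨∞, fun a b => by show |a * 0 - b * 1| = _; norm_num⟩
    · refine ⟨∞, fun a b => ?_⟩
      show |a * 0 - b * 1| = |a * 0 - b * (-1)|
      rw [show a * 0 - b * (-1) = -(a * 0 - b * 1) by ring, abs_neg]
  · exact exists_vertex_pos p q hq hco

lemma farey_walk : ∀ n : ℕ, ∀ x y : OnePoint ℚ, x ≠ y →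
    |vNum x * vDen y - vDen x * vNum y| ≤ 2 ^ n →
    ∃ w : fareyGraph.Walk x y, w.length ≤ n + 1 := by
  intro n
  induction n with
  | zero =>
    intro x y hxy h
    have hne := farey_nondeg hxy
    have habs : |vNum x * vDen y - vDen x * vNum y| = 1 := by
      have := abs_pos.mpr hne
      omega
    exact ⟨(SimpleGraph.Adj.toWalk ⟨hxy, habs⟩), le_of_eq rfl⟩
  | succ n ih =>
    intro x y hxy h
    by_cases h2 : |vNum x * vDen y - vDen x * vNum y| ≤ 2 ^ n
    · obtain ⟨w, hw⟩ := ih x y hxy h2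
      exact ⟨w, by omega⟩
    push_neg at h2
    set a := vNum x with ha
    set b := vDen x with hb
    set c := vNum y with hc
    set d := vDen y with hd
    set D := a * d - b * c with hD
    have hpow : (1 : ℤ) ≤ 2 ^ n := one_le_pow₀ one_le_two
    have hΔ2 : 2 ≤ |D| := by omega
    -- Bézout
    obtain ⟨u, v, huv⟩ := farey_coprime y
    -- huv : u * c + v * d = 1
    set e := a * u - b * (-v) with he
    set Δ := |D| with hΔdef
    have hΔpos : (0 : ℤ) < Δ := by omega
    set r := e % Δ with hr
    have hr0 : 0 ≤ r := Int.emod_nonneg e (by omega)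
    have hr1 : r < Δ := Int.emod_lt_of_pos e hΔpos
    set m : ℤ := if 2 * r ≤ Δ then r else r - Δ with hm
    have hmabs : 2 * |m| ≤ Δ := by
      rcases le_or_gt (2 * r) Δ with hcase | hcase
      · rw [hm, if_pos hcase, abs_of_nonneg hr0]; omega
      · rw [hm, if_neg (by omega), abs_of_nonpos (by omega)]; omega
    have hdvd : D ∣ (m - e) := by
      rw [← abs_dvd, ← hΔdef]
      have : Δ ∣ (r - e) := by
        rw [hr, Int.emod_def]
        exact ⟨-(e / Δ), by ring⟩
      rcases le_or_gt (2 * r) Δ with hcase | hcase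
      · rw [hm, if_pos hcase]; exact this
      · rw [hm, if_neg (by omega)]
        obtain ⟨k, hk⟩ := this
        exact ⟨k - 1, by rw [show r - Δ - e = (r - e) - Δ by ring, hk]; ring⟩
    obtain ⟨t, ht⟩ := hdvd
    set p := -v + t * c with hp
    set q := u + t * d with hq
    have key1 : c * q - d * p = 1 := by
      rw [hp, hq]; linear_combination huv
    have key2 : a * q - b * p = m := by
      rw [hp, hq]
      have : a * (u + t * d) - b * (-v + t * c) = e + D * t := by rw [he, hD]; ring
      rw [this]; omega
    have hcop : IsCoprime p q := ⟨-d, c, by linear_combination key1⟩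
    obtain ⟨z, hz⟩ := exists_vertex p q hcop
    have hadjval : |c * vDen z - d * vNum z| = 1 := by
      rw [hz c d, key1]; norm_num
    have hyz : y ≠ z := by
      intro heq
      rw [← heq] at hadjval
      rw [show c * vDen y - d * vNum y = 0 by rw [hc, hd]; ring] at hadjval
      simp at hadjval
    have hadj : fareyGraph.Adj y z := ⟨hyz, hadjval⟩
    by_cases hzx : z = x
    · subst hzx
      exact ⟨(SimpleGraph.Adj.toWalk hadj.symm), by simp⟩
    · have hxz : x ≠ z := fun hh => hzx hh.symm
      have hbound : |vNum x * vDen z - vDen x * vNum z| ≤ 2 ^ n := by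
        rw [← ha, ← hb, hz a b, key2]
        omega
      obtain ⟨w, hw⟩ := ih x z hxz hbound
      exact ⟨w.concat hadj.symm, by rw [SimpleGraph.Walk.length_concat]; omega⟩


/-- The Farey distance between two distinct slopes is at most
`log₂` of their intersection number plus one: if `Δ = |a·d − b·c| ≤ 2^n` for the
lowest-terms representations `a/b`, `c/d` of the two vertices, then their Farey
distance is at most `n + 1`. -/
theorem farey_dist_le_log_intersection (x y : OnePoint ℚ) (hxy : x ≠ y) (n : ℕ)
    (h : |vNum x * vDen y - vDen x * vNum y| ≤ 2 ^ n) :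
    fareyGraph.dist x y ≤ n + 1 := by
  obtain ⟨w, hw⟩ := farey_walk n x y hxy h
  exact (SimpleGraph.dist_le w).trans hw
end
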